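/- Let α be a nonnegative random variable with finite expectation and continuous CDF F, let T ≥ 0, c ≥ 0, k = 3T + c, and suppose the essential supremum α_H of α is finite with k < α_H (so 0 < r_H = α_H − k < ∞). Then the function g(r) = m(k + r) − r satisfies lim_{r→0+} g(r) > 0 and lim_{r→r_H−} g(r) = −r_H < 0, hence there exists r* ∈ (0, r_H) with m(k + r*) = r*. Moreover the supplier's expected payoff U(r) = (2/3)·r·E[(α − k − r)⁺] attains a strictly positive global maximum over [0,∞) at some point of (0, r_H). -/

import Mathlib

open MeasureTheory Set Filter

/-- The cumulative distribution function of a distribution `μ` on `ℝ`. -/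
noncomputable def cdfR (μ : Measure ℝ) (t : ℝ) : ℝ := (μ (Iic t)).toReal

/-- The mean residual lifetime function `m(t) = E[α − t ∣ α > t]` (with value `0` when
`P(α > t) = 0`, using the junk-value convention `x / 0 = 0`). -/
noncomputable def mrl (μ : Measure ℝ) (t : ℝ) : ℝ :=
  (∫ x, max (x - t) 0 ∂μ) / (μ (Ioi t)).toReal

/-! `m(t) = E[(α − t)⁺] / P(α > t)`. The numerator (the stop-loss transform) is 1-Lipschitz in
`t`, and since the CDF is continuous so is the denominator, which is positive below `α_H`; hence
`m` is continuous on `(−∞, α_H)`. As `α ≤ α_H` almost surely, `0 ≤ m(t) ≤ α_H − t`, so `m(t) → 0`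
as `t → α_H−`. Thus `g(r) = m(k + r) − r` runs from `m(k) > 0` down to `−r_H`, and the
intermediate value theorem gives `r*`. The payoff `U` is continuous, vanishes at `0` and on
`[r_H, ∞)` and is positive in between, so its maximum over the compact `[0, r_H]` is interior and
global. -/

open Topology ProbabilityTheory

lemma exists_mem_Ioo_eq_of_tendsto {f : ℝ → ℝ} {a b v L M : ℝ} (hab : a < b)
    (hf : ContinuousOn f (Ioo a b)) (ha : Tendsto f (𝓝[>] a) (𝓝 L))
    (hb : Tendsto f (𝓝[<] b) (𝓝 M)) (hM : M < v) (hL : v < L) : ∃ x ∈ Ioo a b, f x = v :=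
  isPreconnected_Ioo.intermediate_value_Ioo (le_principal_iff.2 (Ioo_mem_nhdsLT hab))
    (le_principal_iff.2 (Ioo_mem_nhdsGT hab)) hf hb ha ⟨hM, hL⟩

lemma exists_mem_Ioo_isMaxOn_Ici {f : ℝ → ℝ} {a b c : ℝ} (hf : ContinuousOn f (Icc a b))
    (ha : f a ≤ 0) (hb : ∀ x, b ≤ x → f x ≤ 0) (hc : c ∈ Icc a b) (hfc : 0 < f c) :
    ∃ x₀ ∈ Ioo a b, 0 < f x₀ ∧ IsMaxOn f (Ici a) x₀ := by
  obtain ⟨x₀, hx₀, hmax⟩ := isCompact_Icc.exists_isMaxOn ⟨c, hc⟩ hf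
  have hpos : 0 < f x₀ := hfc.trans_le (hmax hc)
  refine ⟨x₀, ⟨hx₀.1.lt_of_ne ?_, hx₀.2.lt_of_ne ?_⟩, hpos, fun x hx => ?_⟩
  · rintro rfl
    linarith
  · rintro rfl
    linarith [hb x₀ le_rfl]
  · rcases le_or_gt x b with hxb | hxb
    · exact hmax ⟨hx, hxb⟩
    · exact (hb x hxb.le).trans hpos.le

noncomputable def stopLoss (μ : Measure ℝ) (t : ℝ) : ℝ := ∫ x, max (x - t) 0 ∂μ

lemma mrl_eq_stopLoss_div (μ : Measure ℝ) (t : ℝ) : mrl μ t = stopLoss μ t / μ.real (Ioi t) :=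
  rfl

section StopLoss

variable {μ : Measure ℝ}

lemma stopLoss_nonneg (t : ℝ) : 0 ≤ stopLoss μ t :=
  integral_nonneg fun _ => le_max_right _ _

lemma mrl_nonneg (t : ℝ) : 0 ≤ mrl μ t :=
  div_nonneg (stopLoss_nonneg t) measureReal_nonneg

lemma integrable_max_sub_const [IsFiniteMeasure μ] (hint : Integrable id μ) (t : ℝ) :
    Integrable (fun x => max (x - t) 0) μ :=
  (hint.sub (integrable_const t)).sup (integrable_const 0)

lemma lipschitzWith_stopLoss [IsProbabilityMeasure μ] (hint : Integrable id μ) :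
    LipschitzWith 1 (stopLoss μ) := by
  refine LipschitzWith.of_dist_le_mul fun s t => ?_
  have hpointwise : ∀ x : ℝ, ‖max (x - s) 0 - max (x - t) 0‖ ≤ |s - t| := fun x =>
    (abs_max_sub_max_le_abs _ _ _).trans_eq (by rw [sub_sub_sub_cancel_left, abs_sub_comm])
  rw [NNReal.coe_one, one_mul, Real.dist_eq, Real.dist_eq, stopLoss, stopLoss,
    ← integral_sub (integrable_max_sub_const hint s) (integrable_max_sub_const hint t)]
  simpa using norm_integral_le_of_norm_le_const (μ := μ) (Eventually.of_forall hpointwise)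

lemma mul_measureReal_Ioi_le_stopLoss [IsFiniteMeasure μ] (hint : Integrable id μ) (t s : ℝ) :
    (s - t) * μ.real (Ioi s) ≤ stopLoss μ t := by
  have hle : (Ioi s).indicator (fun _ => s - t) ≤ fun x => max (x - t) 0 := fun x => by
    by_cases hx : x ∈ Ioi s
    · rw [indicator_of_mem hx]
      exact le_max_of_le_left (by linarith [mem_Ioi.1 hx])
    · rw [indicator_of_notMem hx]
      exact le_max_right _ _
  have := integral_mono ((integrable_const _).indicator measurableSet_Ioi)
    (integrable_max_sub_const hint t) hle
  rwa [integral_indicator_const _ measurableSet_Ioi, smul_eq_mul, mul_comm] at this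

lemma stopLoss_le_of_ae_le [IsFiniteMeasure μ] {b : ℝ} (hb : ∀ᵐ x ∂μ, x ≤ b) (t : ℝ) :
    stopLoss μ t ≤ (b - t) * μ.real (Ioi t) := by
  have hle : (fun x => max (x - t) 0) ≤ᵐ[μ] (Ioi t).indicator fun _ => b - t := by
    filter_upwards [hb] with x hx
    by_cases hxt : x ∈ Ioi t
    · rw [indicator_of_mem hxt]
      exact max_le (by linarith) (by linarith [mem_Ioi.1 hxt])
    · rw [indicator_of_notMem hxt]
      exact max_le (by linarith [not_lt.1 (mt mem_Ioi.2 hxt)]) le_rfl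
  have := integral_mono_of_nonneg (Eventually.of_forall fun _ => le_max_right _ _)
    ((integrable_const _).indicator measurableSet_Ioi) hle
  rwa [integral_indicator_const _ measurableSet_Ioi, smul_eq_mul, mul_comm] at this

lemma stopLoss_eq_zero_of_ae_le [IsFiniteMeasure μ] {b t : ℝ} (hb : ∀ᵐ x ∂μ, x ≤ b)
    (ht : b ≤ t) : stopLoss μ t = 0 :=
  le_antisymm ((stopLoss_le_of_ae_le hb t).trans
    (mul_nonpos_of_nonpos_of_nonneg (by linarith) measureReal_nonneg)) (stopLoss_nonneg t)

lemma mrl_le_of_ae_le [IsFiniteMeasure μ] {b t : ℝ} (hb : ∀ᵐ x ∂μ, x ≤ b)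
    (ht : 0 < μ.real (Ioi t)) : mrl μ t ≤ b - t := by
  rw [mrl_eq_stopLoss_div, div_le_iff₀ ht]
  exact stopLoss_le_of_ae_le hb t

lemma continuous_cdf_of_measure_singleton [IsProbabilityMeasure μ]
    (hcont : ∀ t : ℝ, μ {t} = 0) : Continuous (cdf μ) := by
  refine continuous_iff_continuousAt.2 fun x => ?_
  rw [(monotone_cdf μ).continuousAt_iff_leftLim_eq_rightLim, StieltjesFunction.rightLim_eq]
  have hjump : ENNReal.ofReal (cdf μ x - Function.leftLim (cdf μ) x) = 0 := by
    rw [← StieltjesFunction.measure_singleton, measure_cdf, hcont]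
  linarith [ENNReal.ofReal_eq_zero.1 hjump, (monotone_cdf μ).leftLim_le (le_refl x)]

lemma continuous_measureReal_Ioi [IsProbabilityMeasure μ] (hcont : ∀ t : ℝ, μ {t} = 0) :
    Continuous fun t => μ.real (Ioi t) := by
  simp_rw [← compl_Iic, probReal_compl_eq_one_sub measurableSet_Iic, ← cdf_eq_real]
  exact continuous_const.sub (continuous_cdf_of_measure_singleton hcont)

lemma ae_le_of_essSup_eq {b : ℝ} (h : essSup (fun x : ℝ => (x : EReal)) μ = b) :
    ∀ᵐ x ∂μ, x ≤ b := by
  filter_upwards [ae_le_essSup (f := fun x : ℝ => (x : EReal))] with x hx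
  exact EReal.coe_le_coe_iff.1 (h ▸ hx)

lemma measureReal_Ioi_pos_of_lt_essSup [IsFiniteMeasure μ] {b t : ℝ}
    (h : essSup (fun x : ℝ => (x : EReal)) μ = b) (ht : t < b) : 0 < μ.real (Ioi t) := by
  refine measureReal_nonneg.lt_of_ne' fun h0 => ht.not_ge ?_
  have hle : ∀ᵐ x : ℝ ∂μ, (x : EReal) ≤ t := by
    rw [ae_iff]
    simpa [not_le, ← Ioi_def] using (measureReal_eq_zero_iff (μ := μ)).1 h0
  exact EReal.coe_le_coe_iff.1 (h ▸ essSup_le_of_ae_le _ hle)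

lemma stopLoss_pos_of_lt_essSup [IsFiniteMeasure μ] (hint : Integrable id μ) {b t : ℝ}
    (h : essSup (fun x : ℝ => (x : EReal)) μ = b) (ht : t < b) : 0 < stopLoss μ t :=
  (mul_pos (by linarith) (measureReal_Ioi_pos_of_lt_essSup h (by linarith : (t + b) / 2 < b)))
    |>.trans_le (mul_measureReal_Ioi_le_stopLoss hint t ((t + b) / 2))

lemma mrl_pos_of_lt_essSup [IsFiniteMeasure μ] (hint : Integrable id μ) {b t : ℝ}
    (h : essSup (fun x : ℝ => (x : EReal)) μ = b) (ht : t < b) : 0 < mrl μ t :=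
  div_pos (stopLoss_pos_of_lt_essSup hint h ht) (measureReal_Ioi_pos_of_lt_essSup h ht)

lemma continuousOn_mrl_Iio_essSup [IsProbabilityMeasure μ] (hint : Integrable id μ)
    (hcont : ∀ t : ℝ, μ {t} = 0) {b : ℝ} (h : essSup (fun x : ℝ => (x : EReal)) μ = b) :
    ContinuousOn (mrl μ) (Iio b) := fun _ ht =>
  ((lipschitzWith_stopLoss hint).continuous.continuousAt.div
    (continuous_measureReal_Ioi hcont).continuousAt
    (measureReal_Ioi_pos_of_lt_essSup h ht).ne').continuousWithinAt

lemma tendsto_mrl_nhdsLT_essSup [IsFiniteMeasure μ] {b : ℝ}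
    (h : essSup (fun x : ℝ => (x : EReal)) μ = b) : Tendsto (mrl μ) (𝓝[<] b) (𝓝 0) := by
  have hgap : Tendsto (fun t => b - t) (𝓝[<] b) (𝓝 0) := by
    simpa using (tendsto_const_nhds.sub tendsto_id : Tendsto (fun t => b - t) (𝓝 b) _)
      |>.mono_left nhdsWithin_le_nhds
  refine tendsto_of_tendsto_of_tendsto_of_le_of_le' tendsto_const_nhds hgap
    (Eventually.of_forall mrl_nonneg) ?_
  filter_upwards [self_mem_nhdsWithin] with t ht
  exact mrl_le_of_ae_le (ae_le_of_essSup_eq h) (measureReal_Ioi_pos_of_lt_essSup h ht)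

lemma exists_mem_Ioo_isMaxOn_mul_stopLoss [IsProbabilityMeasure μ] (hint : Integrable id μ)
    {a b k : ℝ} (ha : 0 < a) (h : essSup (fun x : ℝ => (x : EReal)) μ = b) (hk : k < b) :
    ∃ r₀ ∈ Ioo 0 (b - k), 0 < a * r₀ * stopLoss μ (k + r₀) ∧
      IsMaxOn (fun r => a * r * stopLoss μ (k + r)) (Ici 0) r₀ :=
  exists_mem_Ioo_isMaxOn_Ici
    ((continuous_const.mul continuous_id).mul
      ((lipschitzWith_stopLoss hint).continuous.comp (continuous_const_add k))).continuousOn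
    (by simp)
    (fun r hr => by rw [stopLoss_eq_zero_of_ae_le (ae_le_of_essSup_eq h) (by linarith), mul_zero])
    (c := (b - k) / 2) ⟨by linarith, by linarith⟩
    (mul_pos (mul_pos ha (by linarith)) (stopLoss_pos_of_lt_essSup hint h (by linarith)))

end StopLoss

theorem stmt9_general (μ : Measure ℝ) [IsProbabilityMeasure μ]
    (hint : Integrable id μ) (hcont : ∀ t : ℝ, μ {t} = 0)
    (k : ℝ)
    (αH : ℝ) (hαH : essSup (fun x : ℝ => (x : EReal)) μ = (αH : EReal))
    (hkαH : k < αH)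
    (rH : ℝ) (hrH : rH = αH - k)
    (g : ℝ → ℝ) (hg : ∀ r : ℝ, g r = mrl μ (k + r) - r)
    (U : ℝ → ℝ) (hU : ∀ r : ℝ, U r = (2/3) * r * ∫ x, max (x - k - r) 0 ∂μ) :
    (∃ L : ℝ, 0 < L ∧ Tendsto g (nhdsWithin 0 (Ioi 0)) (nhds L)) ∧
    (Tendsto g (nhdsWithin rH (Iio rH)) (nhds (-rH)) ∧ -rH < 0) ∧
    (∃ rstar : ℝ, rstar ∈ Ioo 0 rH ∧ mrl μ (k + rstar) = rstar) ∧
    (∃ r0 : ℝ, r0 ∈ Ioo 0 rH ∧ 0 < U r0 ∧ ∀ r : ℝ, 0 ≤ r → U r ≤ U r0) := by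
  obtain rfl : g = fun r => mrl μ (k + r) - r := funext hg
  obtain rfl : U = fun r => 2 / 3 * r * stopLoss μ (k + r) :=
    funext fun r => by simp only [hU, stopLoss, sub_sub]
  subst hrH
  have hrH_pos : 0 < αH - k := sub_pos.2 hkαH
  have hcontg : ContinuousOn (fun r => mrl μ (k + r) - r) (Iio (αH - k)) :=
    ((continuousOn_mrl_Iio_essSup hint hcont hαH).comp (continuous_const_add k).continuousOn
      fun r hr => by rw [mem_Iio] at hr ⊢; linarith).sub continuousOn_id
  have hlim0 : Tendsto (fun r => mrl μ (k + r) - r) (𝓝[>] 0) (𝓝 (mrl μ k)) := by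
    simpa using (hcontg.continuousAt (Iio_mem_nhds hrH_pos)).tendsto.mono_left nhdsWithin_le_nhds
  have hlimH : Tendsto (fun r => mrl μ (k + r) - r) (𝓝[<] (αH - k)) (𝓝 (-(αH - k))) := by
    have hshift : Tendsto (k + ·) (𝓝[<] (αH - k)) (𝓝[<] αH) := by
      simpa only [Tendsto, add_sub_cancel] using (map_add_left_nhdsLT (c := k) (a := αH - k)).le
    simpa using ((tendsto_mrl_nhdsLT_essSup hαH).comp hshift).sub
      (tendsto_id.mono_left nhdsWithin_le_nhds)
  have hmrl := mrl_pos_of_lt_essSup hint hαH hkαH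
  obtain ⟨rstar, hrstar, hgrstar⟩ := exists_mem_Ioo_eq_of_tendsto hrH_pos
    (hcontg.mono Ioo_subset_Iio_self) hlim0 hlimH (neg_neg_of_pos hrH_pos) hmrl
  obtain ⟨r₀, hr₀, hU₀, hmax⟩ :=
    exists_mem_Ioo_isMaxOn_mul_stopLoss hint (by norm_num : (0 : ℝ) < 2 / 3) hαH hkαH
  exact ⟨⟨_, hmrl, hlim0⟩, ⟨hlimH, by linarith⟩, ⟨rstar, hrstar, sub_eq_zero.1 hgrstar⟩,
    ⟨r₀, hr₀, hU₀, fun r hr => hmax hr⟩⟩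

/-- If the essential supremum `α_H` of `α` is finite with `k = 3T + c < α_H`
(so `0 < r_H = α_H − k < ∞`), then `g(r) = m(k+r) − r` has a strictly positive limit as
`r → 0+`, tends to `−r_H < 0` as `r → r_H−`, so it has a zero `r* ∈ (0, r_H)`; moreover
`U(r) = (2/3)·r·E[(α − k − r)⁺]` attains a strictly positive global maximum over `[0,∞)`
at some point of `(0, r_H)`. -/
theorem stmt9 (μ : Measure ℝ) [IsProbabilityMeasure μ]
    (hnonneg : μ (Iio 0) = 0) (hint : Integrable id μ) (hcont : ∀ t : ℝ, μ {t} = 0)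
    (T c : ℝ) (hT : 0 ≤ T) (hc : 0 ≤ c) (k : ℝ) (hk : k = 3*T + c)
    (αH : ℝ) (hαH : essSup (fun x : ℝ => (x : EReal)) μ = (αH : EReal))
    (hkαH : k < αH)
    (rH : ℝ) (hrH : rH = αH - k)
    (g : ℝ → ℝ) (hg : ∀ r : ℝ, g r = mrl μ (k + r) - r)
    (U : ℝ → ℝ) (hU : ∀ r : ℝ, U r = (2/3) * r * ∫ x, max (x - k - r) 0 ∂μ) :
    (∃ L : ℝ, 0 < L ∧ Tendsto g (nhdsWithin 0 (Ioi 0)) (nhds L)) ∧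
    (Tendsto g (nhdsWithin rH (Iio rH)) (nhds (-rH)) ∧ -rH < 0) ∧
    (∃ rstar : ℝ, rstar ∈ Ioo 0 rH ∧ mrl μ (k + rstar) = rstar) ∧
    (∃ r0 : ℝ, r0 ∈ Ioo 0 rH ∧ 0 < U r0 ∧ ∀ r : ℝ, 0 ≤ r → U r ≤ U r0) :=
  stmt9_general μ hint hcont k αH hαH hkαH rH hrH g hg U hU
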